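/- Fix k ≥ 1, U_I ∈ ℝ^{d×k}, q ∈ ℝ^d, ρ > 0, and suppose α* ∈ Δ_k satisfies min_i α*_i ≥ ρ, and there is λ₀ ∈ ℝ such that P_T(U_Iᵀ(U_I α* − q)) + 0·P_T(log α* + 𝟙) = 0, ⟨α*, 𝟙⟩ = 1, where P_T = I − (1/k)𝟙𝟙ᵀ, and that H = U_IᵀU_I satisfies ⟨v, Hv⟩ > 0 for all nonzero v ⊥ 𝟙 (so P_T H P_T is invertible on T = 𝟙^⊥). Then there exist a neighborhood of ε = 0 and a C¹ (indeed C²) map ε ↦ (α(ε), λ(ε)) with α(0) = α*, taking values in the open set {α : min_i α_i > ρ/2} × ℝ, solving the system P_T(U_Iᵀ(U_I α − q)) + ε·P_T(log α + 𝟙) = 0 and ⟨α, 𝟙⟩ = 1 for each ε in that neighborhood. -/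

import Mathlib

/-!
The constraint `⟨α, 𝟙⟩ = 1` is folded into the `𝟙`-component of a single map
`F(ε, α) = P_T(U_Iᵀ(U_I α − q)) + ε P_T(log α + 𝟙) + (⟨α, 𝟙⟩ − 1) 𝟙`; since `P_T` maps into
`T = 𝟙^⊥`, `F = 0` is exactly the system. At `ε = 0` the partial derivative of `F` in `α` is
`v ↦ P_T H v + ⟨v, 𝟙⟩ 𝟙`. If it kills `v`, then `v ∈ T` and `H v ∈ ℝ𝟙`, so `⟨v, H v⟩ = 0` and
`v = 0`; in finite dimension it is therefore invertible, and the `C²` implicit function theorem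
produces `α(ε)`. The multiplier `λ` does not occur in the system and is taken constant.
-/

open scoped RealInnerProductSpace

noncomputable section

/-- The all-ones vector `𝟙 ∈ ℝ^k`. -/
def onesVec (k : ℕ) : EuclideanSpace ℝ (Fin k) :=
  (WithLp.equiv 2 (Fin k → ℝ)).symm fun _ => 1

/-- The orthogonal projector `P_T = I − (1/k)𝟙𝟙ᵀ` onto `T = {v : ⟨v,𝟙⟩ = 0}`. -/
def projT {k : ℕ} (v : EuclideanSpace ℝ (Fin k)) : EuclideanSpace ℝ (Fin k) :=
  v - ((∑ i, v i) / (k : ℝ)) • onesVec k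

/-- Componentwise logarithm. -/
def logVec {k : ℕ} (x : EuclideanSpace ℝ (Fin k)) : EuclideanSpace ℝ (Fin k) :=
  (WithLp.equiv 2 (Fin k → ℝ)).symm fun i => Real.log (x i)

open ContinuousLinearMap Filter Topology

section InnerProductSpace

variable {E : Type*} [NormedAddCommGroup E] [InnerProductSpace ℝ E]

lemma add_smul_eq_zero_iff_of_inner_eq_zero {u v : E} {c : ℝ} (hu : u ≠ 0) (hv : ⟪v, u⟫ = 0) :
    v + c • u = 0 ↔ v = 0 ∧ c = 0 := by
  refine ⟨fun h => ?_, fun ⟨hv0, hc0⟩ => by simp [hv0, hc0]⟩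
  have hc : c = 0 := by
    have hinner : ⟪v + c • u, u⟫ = c * ‖u‖ ^ 2 := by
      rw [inner_add_left, hv, real_inner_smul_left, real_inner_self_eq_norm_sq, zero_add]
    rw [h, inner_zero_left] at hinner
    simpa [hu] using hinner.symm
  subst hc
  simpa using h

end InnerProductSpace

section Simplex

variable {k : ℕ}

lemma onesVec_apply (i : Fin k) : onesVec k i = 1 := rfl

lemma onesVec_ne_zero (hk : k ≠ 0) : onesVec k ≠ 0 := fun h => by
  simpa [onesVec_apply] using congrArg (· ⟨0, Nat.pos_of_ne_zero hk⟩) h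

lemma inner_onesVec_right (x : EuclideanSpace ℝ (Fin k)) : ⟪x, onesVec k⟫ = ∑ i, x i := by
  simp [PiLp.inner_apply, onesVec_apply]

lemma inner_onesVec_left (x : EuclideanSpace ℝ (Fin k)) : ⟪onesVec k, x⟫ = ∑ i, x i := by
  rw [real_inner_comm, inner_onesVec_right]

lemma inner_projT_onesVec (hk : k ≠ 0) (v : EuclideanSpace ℝ (Fin k)) :
    ⟪projT v, onesVec k⟫ = 0 := by
  have hk' : (k : ℝ) ≠ 0 := Nat.cast_ne_zero.2 hk
  simp only [projT, inner_sub_left, real_inner_smul_left, inner_onesVec_right, onesVec_apply,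
    Finset.sum_const, Finset.card_univ, Fintype.card_fin, nsmul_eq_mul, mul_one]
  field_simp
  ring

lemma inner_eq_zero_of_projT_eq_zero {v w : EuclideanSpace ℝ (Fin k)} (hw : projT w = 0)
    (hv : ⟪v, onesVec k⟫ = 0) : ⟪v, w⟫ = 0 := by
  rw [projT, sub_eq_zero] at hw
  rw [hw, real_inner_smul_right, hv, mul_zero]

def projTL (k : ℕ) : EuclideanSpace ℝ (Fin k) →L[ℝ] EuclideanSpace ℝ (Fin k) :=
  .id ℝ _ - (k : ℝ)⁻¹ • (innerSL ℝ (onesVec k)).smulRight (onesVec k)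

lemma projTL_apply (v : EuclideanSpace ℝ (Fin k)) : projTL k v = projT v := by
  simp [projTL, projT, div_eq_inv_mul, smul_smul, inner_onesVec_left]

lemma contDiffAt_logVec {n : WithTop ℕ∞} {x : EuclideanSpace ℝ (Fin k)} (hx : ∀ i, x i ≠ 0) :
    ContDiffAt ℝ n logVec x :=
  contDiffAt_piLp' 2 fun i => (Real.contDiffAt_log.2 (hx i)).comp x (contDiffAt_piLp_apply 2)

end Simplex

section StationarityMap

variable {d k : ℕ} (UI : EuclideanSpace ℝ (Fin k) →L[ℝ] EuclideanSpace ℝ (Fin d))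
  (q : EuclideanSpace ℝ (Fin d))

def stationarityMap (p : ℝ × EuclideanSpace ℝ (Fin k)) : EuclideanSpace ℝ (Fin k) :=
  projT (adjoint UI (UI p.2 - q)) + p.1 • projT (logVec p.2 + onesVec k)
    + (⟪p.2, onesVec k⟫ - 1) • onesVec k

def stationarityJacobian : EuclideanSpace ℝ (Fin k) →L[ℝ] EuclideanSpace ℝ (Fin k) :=
  projTL k ∘L adjoint UI ∘L UI + (innerSL ℝ (onesVec k)).smulRight (onesVec k)

variable {UI q}

lemma stationarityMap_eq_zero_iff (hk : k ≠ 0) {ε : ℝ} {α : EuclideanSpace ℝ (Fin k)} :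
    stationarityMap UI q (ε, α) = 0 ↔
      projT (adjoint UI (UI α - q)) + ε • projT (logVec α + onesVec k) = 0 ∧
        ⟪α, onesVec k⟫ = 1 := by
  rw [stationarityMap, add_smul_eq_zero_iff_of_inner_eq_zero (onesVec_ne_zero hk), sub_eq_zero]
  rw [inner_add_left, real_inner_smul_left, inner_projT_onesVec hk, inner_projT_onesVec hk,
    mul_zero, add_zero]

lemma contDiffAt_stationarityMap {n : WithTop ℕ∞} {ε : ℝ} {α : EuclideanSpace ℝ (Fin k)}
    (hα : ∀ i, α i ≠ 0) : ContDiffAt ℝ n (stationarityMap UI q) (ε, α) := by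
  have hproj : ∀ v, projT v = projTL k v := fun v => (projTL_apply v).symm
  unfold stationarityMap
  simp only [hproj]
  have hlog : ContDiffAt ℝ n (fun p : ℝ × EuclideanSpace ℝ (Fin k) => logVec p.2) (ε, α) :=
    (contDiffAt_logVec hα).comp (g := logVec) _ contDiffAt_snd
  have hP : ContDiff ℝ n (projTL k) := (projTL k).contDiff
  have hA : ContDiff ℝ n (adjoint UI) := (adjoint UI).contDiff
  have hU : ContDiff ℝ n UI := UI.contDiff
  have hsum : ContDiff ℝ n fun x : EuclideanSpace ℝ (Fin k) => ⟪x, onesVec k⟫ :=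
    contDiff_id.inner ℝ contDiff_const
  fun_prop

lemma hasFDerivAt_stationarityMap_zero (α : EuclideanSpace ℝ (Fin k)) :
    HasFDerivAt (fun x => stationarityMap UI q (0, x)) (stationarityJacobian UI) α := by
  have hslice : (fun x => stationarityMap UI q (0, x)) =
      fun x => stationarityJacobian UI x - (projT (adjoint UI q) + onesVec k) := by
    ext1 x
    simp only [stationarityMap, stationarityJacobian, zero_smul, add_zero, add_apply, comp_apply,
      smulRight_apply, innerSL_apply_apply, ← projTL_apply, map_sub, sub_smul, one_smul,
      real_inner_comm x]
    abel
  rw [hslice]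
  exact (stationarityJacobian UI).hasFDerivAt.sub_const _

lemma fderiv_stationarityMap_comp_inr {α : EuclideanSpace ℝ (Fin k)}
    (hF : DifferentiableAt ℝ (stationarityMap UI q) (0, α)) :
    fderiv ℝ (stationarityMap UI q) (0, α) ∘L inr ℝ ℝ _ = stationarityJacobian UI :=
  (hF.hasFDerivAt.comp α (hasFDerivAt_prodMk_right 0 α)).unique
    (hasFDerivAt_stationarityMap_zero α)

lemma isInvertible_stationarityJacobian (hk : k ≠ 0)
    (hH : ∀ v : EuclideanSpace ℝ (Fin k), ⟪v, onesVec k⟫ = 0 → v ≠ 0 →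
      0 < ⟪v, adjoint UI (UI v)⟫) :
    (stationarityJacobian UI).IsInvertible := by
  have hinj : Function.Injective (stationarityJacobian UI) := by
    rw [injective_iff_map_eq_zero]
    intro v hv
    simp only [stationarityJacobian, add_apply, comp_apply, smulRight_apply,
      innerSL_apply_apply, projTL_apply] at hv
    obtain ⟨hproj, hsum⟩ :=
      (add_smul_eq_zero_iff_of_inner_eq_zero (onesVec_ne_zero hk) (inner_projT_onesVec hk _)).1 hv
    rw [real_inner_comm] at hsum
    by_contra hne
    exact (hH v hsum hne).ne' (inner_eq_zero_of_projT_eq_zero hproj hsum)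
  exact ⟨(LinearEquiv.ofInjectiveEndo _ hinj).toContinuousLinearEquiv, rfl⟩

end StationarityMap

theorem entropic_solution_map_smooth_general
    (d k : ℕ) (hk : 1 ≤ k)
    (UI : EuclideanSpace ℝ (Fin k) →L[ℝ] EuclideanSpace ℝ (Fin d))
    (q : EuclideanSpace ℝ (Fin d)) (ρ : ℝ) (hρ : 0 < ρ)
    (αstar : EuclideanSpace ℝ (Fin k))
    (hstar_pos : ∀ i, ρ ≤ αstar i)
    (hstar_sum : ⟪αstar, onesVec k⟫ = 1)
    (hstat : projT ((ContinuousLinearMap.adjoint UI) (UI αstar - q))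
      + (0 : ℝ) • projT (logVec αstar + onesVec k) = 0)
    (hH : ∀ v : EuclideanSpace ℝ (Fin k), ⟪v, onesVec k⟫ = 0 → v ≠ 0 →
      0 < ⟪v, (ContinuousLinearMap.adjoint UI) (UI v)⟫) :
    ∃ δ : ℝ, 0 < δ ∧
      ∃ (α : ℝ → EuclideanSpace ℝ (Fin k)) (lam : ℝ → ℝ),
        α 0 = αstar ∧
        ContDiffOn ℝ 2 α (Set.Ioo (-δ) δ) ∧
        ContDiffOn ℝ 2 lam (Set.Ioo (-δ) δ) ∧
        ∀ ε ∈ Set.Ioo (-δ) δ,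
          (∀ i, ρ / 2 < α ε i) ∧
          projT ((ContinuousLinearMap.adjoint UI) (UI (α ε) - q))
            + ε • projT (logVec (α ε) + onesVec k) = 0 ∧
          ⟪α ε, onesVec k⟫ = 1 := by
  have hk₀ : k ≠ 0 := Nat.one_le_iff_ne_zero.1 hk
  have hstar_ne : ∀ i, αstar i ≠ 0 := fun i => (hρ.trans_le (hstar_pos i)).ne'
  have hF : ContDiffAt ℝ 2 (stationarityMap UI q) (0, αstar) := contDiffAt_stationarityMap hstar_ne
  have hJ : (fderiv ℝ (stationarityMap UI q) (0, αstar) ∘L .inr ℝ ℝ _).IsInvertible := by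
    rw [fderiv_stationarityMap_comp_inr (hF.differentiableAt two_ne_zero)]
    exact isInvertible_stationarityJacobian hk₀ hH
  set α := hF.implicitFunction two_ne_zero hJ
  have hα₀ : α 0 = αstar := hF.implicitFunction_apply_self two_ne_zero hJ
  have hαC : ContDiffAt ℝ 2 α 0 := hF.contDiffAt_implicitFunction two_ne_zero hJ
  have hF₀ : stationarityMap UI q (0, αstar) = 0 :=
    (stationarityMap_eq_zero_iff hk₀).2 ⟨by simpa using hstat, hstar_sum⟩
  have hsolves : ∀ᶠ ε in 𝓝 0, stationarityMap UI q (ε, α ε) = 0 := by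
    simpa [hF₀] using hF.eventually_apply_implicitFunction two_ne_zero hJ
  have hbound : ∀ᶠ ε in 𝓝 0, ∀ i, ρ / 2 < α ε i := by
    refine eventually_all.2 fun i => ?_
    have hcont : ContinuousAt (fun ε => α ε i) 0 :=
      (PiLp.continuous_apply 2 _ i).continuousAt.comp hαC.continuousAt
    exact hcont.eventually (lt_mem_nhds (show ρ / 2 < α 0 i by rw [hα₀]; linarith [hstar_pos i]))
  obtain ⟨δ, hδ, hball⟩ := Metric.eventually_nhds_iff_ball.1
    ((hαC.eventually (by simp)).and (hbound.and hsolves))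
  simp only [Real.ball_zero_eq_Ioo] at hball
  refine ⟨δ, hδ, α, fun _ => 0, hα₀, fun ε hε => (hball ε hε).1.contDiffWithinAt,
    contDiffOn_const, fun ε hε => ?_⟩
  obtain ⟨-, hpos, hzero⟩ := hball ε hε
  exact ⟨hpos, (stationarityMap_eq_zero_iff hk₀).1 hzero⟩

/-- local smoothness of the entropic solution map on the active
face (implicit function theorem).  If `α* ∈ Δ_k` with `min_i α*_i ≥ ρ > 0`
solves the projected stationarity system at `ε = 0`, and `H = U_IᵀU_I` is
positive definite on `T = 𝟙^⊥`, then there is a `C²` curve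
`ε ↦ (α(ε), λ(ε))` on a neighborhood of `0`, with `α(0) = α*`, taking values in
`{α : min_i α_i > ρ/2} × ℝ` and solving
`P_T(U_Iᵀ(U_Iα − q)) + ε P_T(log α + 𝟙) = 0`, `⟨α, 𝟙⟩ = 1` there. -/
theorem entropic_solution_map_smooth
    (d k : ℕ) (hk : 1 ≤ k)
    (UI : EuclideanSpace ℝ (Fin k) →L[ℝ] EuclideanSpace ℝ (Fin d))
    (q : EuclideanSpace ℝ (Fin d)) (ρ : ℝ) (hρ : 0 < ρ)
    (αstar : EuclideanSpace ℝ (Fin k))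
    (hstar_pos : ∀ i, ρ ≤ αstar i)
    (hstar_sum : ⟪αstar, onesVec k⟫ = 1)
    (lam₀ : ℝ)
    (hstat : projT ((ContinuousLinearMap.adjoint UI) (UI αstar - q))
      + (0 : ℝ) • projT (logVec αstar + onesVec k) = 0)
    (hH : ∀ v : EuclideanSpace ℝ (Fin k), ⟪v, onesVec k⟫ = 0 → v ≠ 0 →
      0 < ⟪v, (ContinuousLinearMap.adjoint UI) (UI v)⟫) :
    ∃ δ : ℝ, 0 < δ ∧
      ∃ (α : ℝ → EuclideanSpace ℝ (Fin k)) (lam : ℝ → ℝ),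
        α 0 = αstar ∧
        ContDiffOn ℝ 2 α (Set.Ioo (-δ) δ) ∧
        ContDiffOn ℝ 2 lam (Set.Ioo (-δ) δ) ∧
        ∀ ε ∈ Set.Ioo (-δ) δ,
          (∀ i, ρ / 2 < α ε i) ∧
          projT ((ContinuousLinearMap.adjoint UI) (UI (α ε) - q))
            + ε • projT (logVec (α ε) + onesVec k) = 0 ∧
          ⟪α ε, onesVec k⟫ = 1 :=
  entropic_solution_map_smooth_general d k hk UI q ρ hρ αstar hstar_pos hstar_sum hstat hH
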